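/- For every 3CNF formula φ = C1 ∧ ⋯ ∧ Cm over Boolean variables x1,…,xn, associate with every xi the 2m capture variables x_i^{j,t} and x_i^{j,f} (1 ≤ j ≤ m), and define the regex formulas γ1 := γ_{x1}·⋯·γ_{xn}·a, where γ_{xi} := (x_i^{1,t}{ε}·⋯·x_i^{m,t}{ε}) ∨ (x_i^{1,f}{ε}·⋯·x_i^{m,f}{ε}), and γ2 := a·δ1·⋯·δm, where δj is the disjunction, over the three literals of Cj, of x_i^{j,t}{ε} if the literal is xi and of x_i^{j,f}{ε} if the literal is ¬xi, and where a ∈ Σ is a fixed letter. Then γ1 and γ2 are sequential regex formulas, and ⟦γ1 ⋈ γ2⟧(d) ≠ ∅ for the one-letter document d = a if and only if φ is satisfiable. -/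

import Mathlib

/-!
Every variable of `γ1` and `γ2` captures an empty span: on the document `a`, the variables of
`γ1` are bound at position 1, before the letter, and those of `γ2` at position 2, after it.
So a mapping of `γ1` and one of `γ2` are compatible exactly when their domains are disjoint.
A mapping of `γ1` picks for each `xᵢ` a branch `c` and binds every `x_i^{j,c}`; a mapping of
`γ2` picks a literal of each clause `C_j` and binds the matching `x_i^{j,t}` or `x_i^{j,f}`.
Disjointness says that every picked literal has the polarity opposite to the branch of its
variable, i.e. it is true under the assignment `xᵢ ↦ ¬c`.
-/

namespace Spanners

open scoped Classical

/-! ### Spans and mappings -/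

abbrev Span := ℕ × ℕ

abbrev VMapping := ℕ → Option Span

def emptyMapping : VMapping := fun _ => none

def mapDom (μ : VMapping) : Set ℕ := {x | μ x ≠ none}

/-- Two mappings are compatible if they agree on every common variable. -/
def Compatible (μ1 μ2 : VMapping) : Prop :=
  ∀ x s1 s2, μ1 x = some s1 → μ2 x = some s2 → s1 = s2

def DisjointDom (μ1 μ2 : VMapping) : Prop :=
  ∀ x, μ1 x = none ∨ μ2 x = none

def munion (μ1 μ2 : VMapping) : VMapping := fun x =>
  match μ1 x with
  | some s => some s
  | none => μ2 x

def minsert (x : ℕ) (s : Span) (μ : VMapping) : VMapping :=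
  fun y => if y = x then some s else μ y

/-- Natural join of two sets of mappings. -/
def joinSet (S1 S2 : Set VMapping) : Set VMapping :=
  {μ | ∃ μ1 ∈ S1, ∃ μ2 ∈ S2, Compatible μ1 μ2 ∧ μ = munion μ1 μ2}

/-- Difference of two sets of mappings. -/
def diffSet (S1 S2 : Set VMapping) : Set VMapping :=
  {μ1 | μ1 ∈ S1 ∧ ∀ μ2 ∈ S2, ¬ Compatible μ1 μ2}

/-- Restriction of a mapping to a set of variables. -/
noncomputable def restrictMap (μ : VMapping) (V : Set ℕ) : VMapping :=
  fun x => if x ∈ V then μ x else none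

/-- Projection of a set of mappings to a set of variables. -/
def projSet (V : Set ℕ) (S : Set VMapping) : Set VMapping :=
  {μ' | ∃ μ ∈ S, μ' = restrictMap μ V}

/-! ### Regex formulas -/

inductive RGX (Sig : Type) where
  | empty : RGX Sig
  | eps : RGX Sig
  | letter : Sig → RGX Sig
  | union : RGX Sig → RGX Sig → RGX Sig
  | concat : RGX Sig → RGX Sig → RGX Sig
  | star : RGX Sig → RGX Sig
  | bind : ℕ → RGX Sig → RGX Sig

variable {Sig : Type}

def RGX.vars : RGX Sig → Finset ℕ
  | .empty => ∅
  | .eps => ∅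
  | .letter _ => ∅
  | .union a b => a.vars ∪ b.vars
  | .concat a b => a.vars ∪ b.vars
  | .star a => a.vars
  | .bind x a => insert x a.vars

def RGX.size : RGX Sig → ℕ
  | .empty => 1
  | .eps => 1
  | .letter _ => 1
  | .union a b => a.size + b.size + 1
  | .concat a b => a.size + b.size + 1
  | .star a => a.size + 1
  | .bind _ a => a.size + 1

/-- The schemaless semantics `⟨α⟩(d)`: `RMatch α d i j μ` means `([i,j⟩, μ) ∈ ⟨α⟩(d)`. -/
inductive RMatch : RGX Sig → List Sig → ℕ → ℕ → VMapping → Prop where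
  | eps {d : List Sig} {i : ℕ} (h1 : 1 ≤ i) (h2 : i ≤ d.length + 1) :
      RMatch .eps d i i emptyMapping
  | letter {d : List Sig} {i : ℕ} {σ : Sig} (h1 : 1 ≤ i) (h2 : d[i - 1]? = some σ) :
      RMatch (.letter σ) d i (i + 1) emptyMapping
  | unionL {a b : RGX Sig} {d : List Sig} {i j : ℕ} {μ : VMapping}
      (h : RMatch a d i j μ) : RMatch (.union a b) d i j μ
  | unionR {a b : RGX Sig} {d : List Sig} {i j : ℕ} {μ : VMapping}
      (h : RMatch b d i j μ) : RMatch (.union a b) d i j μ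
  | concat {a b : RGX Sig} {d : List Sig} {i k j : ℕ} {μ1 μ2 : VMapping}
      (h1 : RMatch a d i k μ1) (h2 : RMatch b d k j μ2) (hd : DisjointDom μ1 μ2) :
      RMatch (.concat a b) d i j (munion μ1 μ2)
  | bind {x : ℕ} {a : RGX Sig} {d : List Sig} {i j : ℕ} {μ : VMapping}
      (h : RMatch a d i j μ) (hx : μ x = none) :
      RMatch (.bind x a) d i j (minsert x (i, j) μ)
  | starNil {a : RGX Sig} {d : List Sig} {i : ℕ} (h1 : 1 ≤ i) (h2 : i ≤ d.length + 1) :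
      RMatch (.star a) d i i emptyMapping
  | starCons {a : RGX Sig} {d : List Sig} {i k j : ℕ} {μ1 μ2 : VMapping}
      (h1 : RMatch a d i k μ1) (h2 : RMatch (.star a) d k j μ2) (hd : DisjointDom μ1 μ2) :
      RMatch (.star a) d i j (munion μ1 μ2)

/-- `⟦α⟧(d)`: mappings extracted with the full span. -/
def rgxSem (α : RGX Sig) (d : List Sig) : Set VMapping :=
  {μ | RMatch α d 1 (d.length + 1) μ}

/-- Sequential regex formulas. -/
def RGX.Sequential : RGX Sig → Prop
  | .empty => True
  | .eps => True
  | .letter _ => True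
  | .union a b => a.Sequential ∧ b.Sequential
  | .concat a b => a.Sequential ∧ b.Sequential ∧ Disjoint a.vars b.vars
  | .star a => a.Sequential ∧ a.vars = ∅
  | .bind x a => a.Sequential ∧ x ∉ a.vars

/-- Variable-free words over the alphabet (built from ε, letters and concatenation). -/
inductive RGX.IsWord : RGX Sig → Prop where
  | eps : RGX.IsWord .eps
  | letter (σ : Sig) : RGX.IsWord (.letter σ)
  | concat {a b : RGX Sig} : a.IsWord → b.IsWord → RGX.IsWord (.concat a b)

/-- Functional for a set `V` of variables. -/
inductive FunctionalFor : RGX Sig → Finset ℕ → Prop where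
  | word {α : RGX Sig} (h : α.IsWord) : FunctionalFor α ∅
  | union {a b : RGX Sig} {V : Finset ℕ} (ha : FunctionalFor a V) (hb : FunctionalFor b V) :
      FunctionalFor (.union a b) V
  | concat {a b : RGX Sig} {V : Finset ℕ} (V1 : Finset ℕ) (hsub : V1 ⊆ V)
      (ha : FunctionalFor a V1) (hb : FunctionalFor b (V \ V1)) :
      FunctionalFor (.concat a b) V
  | star {a : RGX Sig} (h : FunctionalFor a ∅) : FunctionalFor (.star a) ∅
  | bind {x : ℕ} {a : RGX Sig} {V : Finset ℕ} (h : FunctionalFor a (V.erase x)) :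
      FunctionalFor (.bind x a) V

def RGX.Functional (α : RGX Sig) : Prop := FunctionalFor α α.vars

/-- Disjunctive functional regex formulas: finite disjunctions of functional regex formulas. -/
inductive DisjFunctional : RGX Sig → Prop where
  | base {γ : RGX Sig} (h : γ.Functional) : DisjFunctional γ
  | union {a b : RGX Sig} (ha : DisjFunctional a) (hb : DisjFunctional b) :
      DisjFunctional (.union a b)

/-- Number of disjuncts of a (disjunctive) regex formula. -/
def countDisjuncts : RGX Sig → ℕ
  | .union a b => countDisjuncts a + countDisjuncts b
  | _ => 1

/-- Disjunction-free regex formulas. -/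
def RGX.DisjFree : RGX Sig → Prop
  | .union _ _ => False
  | .concat a b => a.DisjFree ∧ b.DisjFree
  | .star a => a.DisjFree
  | .bind _ a => a.DisjFree
  | _ => True

/-- `γ` is synchronized for `x`: no subformula `γ1 ∨ γ2` contains `x`. -/
def RGX.SyncFor : RGX Sig → ℕ → Prop
  | .union a b, x => (x ∉ a.vars ∧ x ∉ b.vars) ∧ a.SyncFor x ∧ b.SyncFor x
  | .concat a b, x => a.SyncFor x ∧ b.SyncFor x
  | .star a, x => a.SyncFor x
  | .bind _ a, x => a.SyncFor x
  | _, _ => True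

/-- Concatenation of a list of regex formulas. -/
def concatList : List (RGX Sig) → RGX Sig
  | [] => .eps
  | [α] => α
  | α :: rest => .concat α (concatList rest)

/-- Disjunction of a list of regex formulas. -/
def disjList : List (RGX Sig) → RGX Sig
  | [] => .empty
  | [α] => α
  | α :: rest => .union α (disjList rest)

/-! ### vset-automata -/

inductive VLabel (Sig : Type) where
  | eps : VLabel Sig
  | letter : Sig → VLabel Sig
  | openv : ℕ → VLabel Sig
  | closev : ℕ → VLabel Sig
deriving DecidableEq

structure VA (Sig : Type) [DecidableEq Sig] where
  q0 : ℕ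
  F : Finset ℕ
  δ : Finset (ℕ × VLabel Sig × ℕ)

variable [DecidableEq Sig]

/-- The states of a VA: the initial state and all states mentioned in `F` or in transitions. -/
def statesOf (A : VA Sig) : Finset ℕ :=
  insert A.q0 (A.F ∪ A.δ.image (fun t => t.1) ∪ A.δ.image (fun t => t.2.2))

def labelVars : VLabel Sig → Finset ℕ
  | .openv x => {x}
  | .closev x => {x}
  | _ => ∅

/-- `Vars(A)`: the variables mentioned in the transitions of `A`. -/
def varsOf (A : VA Sig) : Finset ℕ := A.δ.biUnion (fun t => labelVars t.2.1)

/-- Total size of a VA: number of states plus number of transitions. -/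
def vaSize (A : VA Sig) : ℕ := (statesOf A).card + A.δ.card

/-- `A.PathFrom p ls q`: a path (run segment) from `p` to `q` with label sequence `ls`. -/
inductive VA.PathFrom (A : VA Sig) : ℕ → List (VLabel Sig) → ℕ → Prop where
  | nil (q : ℕ) : VA.PathFrom A q [] q
  | cons {p q r : ℕ} {l : VLabel Sig} {ls : List (VLabel Sig)}
      (h : (p, l, q) ∈ A.δ) (htail : VA.PathFrom A q ls r) : VA.PathFrom A p (l :: ls) r

/-- The word (document) read by a sequence of labels. -/
def readWord : List (VLabel Sig) → List Sig :=
  List.filterMap fun l => match l with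
    | VLabel.letter σ => some σ
    | _ => none

def isLetterL : VLabel Sig → Bool
  | .letter _ => true
  | _ => false

/-- The current position in the document just before executing the `k`-th label. -/
def posAt (ls : List (VLabel Sig)) (k : ℕ) : ℕ := 1 + (ls.take k).countP isLetterL

/-- Validity of a run, given by its label sequence. -/
def ValidLabels (ls : List (VLabel Sig)) : Prop :=
  ∀ x : ℕ,
    ls.count (VLabel.openv x) ≤ 1 ∧
    ls.count (VLabel.closev x) ≤ 1 ∧
    ((VLabel.openv x) ∈ ls ↔ (VLabel.closev x) ∈ ls) ∧
    ∀ i j : ℕ, ls[i]? = some (VLabel.openv x) → ls[j]? = some (VLabel.closev x) →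
      posAt ls i ≤ posAt ls j

/-- The mapping `μ_ρ` extracted from a (valid accepting) run with label sequence `ls`. -/
def runMapping (ls : List (VLabel Sig)) : VMapping := fun x =>
  if (VLabel.openv x) ∈ ls then
    some (posAt ls (ls.idxOf (VLabel.openv x)), posAt ls (ls.idxOf (VLabel.closev x)))
  else none

/-- `ls` is the label sequence of an accepting run of `A`. -/
def AcceptsWith (A : VA Sig) (ls : List (VLabel Sig)) : Prop :=
  ∃ qf, VA.PathFrom A A.q0 ls qf ∧ qf ∈ A.F

/-- `⟦A⟧(d)`. -/
def vaSem (A : VA Sig) (d : List Sig) : Set VMapping :=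
  {μ | ∃ ls, AcceptsWith A ls ∧ readWord ls = d ∧ ValidLabels ls ∧ μ = runMapping ls}

/-- A VA is sequential if all of its accepting runs are valid. -/
def VA.Sequential (A : VA Sig) : Prop := ∀ ls, AcceptsWith A ls → ValidLabels ls

/-- A run from the initial state to `q` that is a prefix of an accepting run. -/
def PrefixRun (A : VA Sig) (ls : List (VLabel Sig)) (q : ℕ) : Prop :=
  VA.PathFrom A A.q0 ls q ∧ ∃ ls' qf, VA.PathFrom A q ls' qf ∧ qf ∈ A.F

/-- `A` is semi-functional for the variable `x`: no state has extended configuration `d`. -/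
def SemiFunctionalFor (A : VA Sig) (x : ℕ) : Prop :=
  ¬ ∃ q ls1 ls2, PrefixRun A ls1 q ∧ PrefixRun A ls2 q ∧
      (VLabel.closev x) ∈ ls1 ∧ (VLabel.openv x) ∉ ls2

def SemiFunctionalForSet (A : VA Sig) (X : Finset ℕ) : Prop :=
  ∀ x ∈ X, SemiFunctionalFor A x

/-- Functional VA: sequential, and every accepting run opens and closes every variable. -/
def FunctionalVA (A : VA Sig) : Prop :=
  A.Sequential ∧ ∀ ls, AcceptsWith A ls → ∀ x ∈ varsOf A,
    (VLabel.openv x) ∈ ls ∧ (VLabel.closev x) ∈ ls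

/-- `l` has a unique target state in `A`. -/
def UniqueTarget (A : VA Sig) (l : VLabel Sig) : Prop :=
  ∃ qt : ℕ, ∀ p q : ℕ, (p, l, q) ∈ A.δ → q = qt

/-- `A` is synchronized for the variable `x`. -/
def SyncForVA (A : VA Sig) (x : ℕ) : Prop :=
  UniqueTarget A (VLabel.openv x) ∧ UniqueTarget A (VLabel.closev x) ∧
    ((∀ ls, AcceptsWith A ls → (VLabel.openv x) ∈ ls ∧ (VLabel.closev x) ∈ ls) ∨
     (∀ ls, AcceptsWith A ls → (VLabel.openv x) ∉ ls ∧ (VLabel.closev x) ∉ ls))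

/-- `A` is the disjunctive functional VA with functional components `parts`. -/
def DisjFunctionalVAWith (A : VA Sig) (parts : List (VA Sig)) : Prop :=
  (∀ B ∈ parts, FunctionalVA B) ∧
  (parts.Pairwise fun B C => Disjoint (statesOf B) (statesOf C)) ∧
  (∀ B ∈ parts, A.q0 ∉ statesOf B) ∧
  A.F = parts.foldr (fun B s => B.F ∪ s) (∅ : Finset ℕ) ∧
  A.δ = (parts.map (fun B => (A.q0, (VLabel.eps : VLabel Sig), B.q0))).toFinset
        ∪ parts.foldr (fun B s => B.δ ∪ s) (∅ : Finset (ℕ × VLabel Sig × ℕ))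

def DisjFunctionalVA (A : VA Sig) : Prop := ∃ parts, DisjFunctionalVAWith A parts

/-! ### 3CNF formulas -/

/-- A 3CNF clause over `n` Boolean variables: a triple of literals; `(i, true)` is `xᵢ`,
`(i, false)` is `¬xᵢ`. -/
def Clause3 (n : ℕ) : Type := (Fin n × Bool) × (Fin n × Bool) × (Fin n × Bool)

def litsOf {n : ℕ} (c : Clause3 n) : List (Fin n × Bool) := [c.1, c.2.1, c.2.2]

def clauseSat {n : ℕ} (τ : Fin n → Bool) (c : Clause3 n) : Prop :=
  ∃ l ∈ litsOf c, τ l.1 = l.2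

def Sat3 {n m : ℕ} (φ : Fin m → Clause3 n) : Prop :=
  ∃ τ : Fin n → Bool, ∀ j, clauseSat τ (φ j)

end Spanners

namespace Spanners

variable {Sig : Type}

/-- The capture variable `x_i^{j,b}`, encoded injectively as a natural number. -/
def encVar0 (m i j : ℕ) (b : Bool) : ℕ := 2 * (i * m + j) + b.toNat

/-- `γ_{x_i} = (x_i^{1,t}{ε}⋯x_i^{m,t}{ε}) ∨ (x_i^{1,f}{ε}⋯x_i^{m,f}{ε})`. -/
def gammaVar0 (n m : ℕ) (i : Fin n) : RGX Sig :=
  .union (concatList (List.ofFn fun j : Fin m => .bind (encVar0 m i j true) .eps))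
         (concatList (List.ofFn fun j : Fin m => .bind (encVar0 m i j false) .eps))

/-- `γ1 = γ_{x1}·⋯·γ_{xn}·a`. -/
def gamma1S0 (a : Sig) (n m : ℕ) : RGX Sig :=
  concatList ((List.ofFn fun i : Fin n => gammaVar0 n m i) ++ [.letter a])

/-- `δ_j`: the disjunction over the three literals of clause `C_j`. -/
def deltaS0 {n m : ℕ} (φ : Fin m → Clause3 n) (j : Fin m) : RGX Sig :=
  disjList ((litsOf (φ j)).map fun l => .bind (encVar0 m l.1 j l.2) .eps)

/-- `γ2 = a·δ1·⋯·δm`. -/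
def gamma2S0 (a : Sig) {n m : ℕ} (φ : Fin m → Clause3 n) : RGX Sig :=
  concatList (.letter a :: List.ofFn fun j : Fin m => deltaS0 φ j)

open scoped Classical

/-! ### Mappings -/

noncomputable def constMapping (S : Set ℕ) (s : Span) : VMapping :=
  fun x => if x ∈ S then some s else none

def ExtendedBy (μ ν : VMapping) : Prop :=
  ∀ x s, μ x = some s → ν x = some s

lemma ExtendedBy.trans {μ ν ρ : VMapping} (h₁ : ExtendedBy μ ν) (h₂ : ExtendedBy ν ρ) :
    ExtendedBy μ ρ :=
  fun x s h => h₂ x s (h₁ x s h)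

lemma extendedBy_munion_left (μ ν : VMapping) : ExtendedBy μ (munion μ ν) := by
  intro x s h
  simp [munion, h]

lemma extendedBy_munion_right {μ ν : VMapping} (hd : DisjointDom μ ν) :
    ExtendedBy ν (munion μ ν) := by
  intro x s h
  rcases hd x with h' | h'
  · simp [munion, h', h]
  · simp [h'] at h

lemma munion_emptyMapping_right (μ : VMapping) : munion μ emptyMapping = μ := by
  funext x
  cases h : μ x <;> simp [munion, h, emptyMapping]

lemma munion_assoc (μ ν ρ : VMapping) : munion (munion μ ν) ρ = munion μ (munion ν ρ) := by
  funext x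
  cases h : μ x <;> simp [munion, h]

lemma disjointDom_munion_left {μ ν ρ : VMapping} :
    DisjointDom (munion μ ν) ρ ↔ DisjointDom μ ρ ∧ DisjointDom ν ρ := by
  simp only [DisjointDom, munion, ← forall_and]
  refine forall_congr' fun x => ?_
  cases μ x <;> simp +contextual

lemma disjointDom_munion_right {μ ν ρ : VMapping} :
    DisjointDom μ (munion ν ρ) ↔ DisjointDom μ ν ∧ DisjointDom μ ρ := by
  simp only [DisjointDom, munion, ← forall_and]
  refine forall_congr' fun x => ?_
  cases ν x <;> simp +contextual

lemma constMapping_empty (s : Span) : constMapping ∅ s = emptyMapping := by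
  funext x
  simp [constMapping, emptyMapping]

lemma constMapping_singleton (x : ℕ) (s : Span) :
    constMapping {x} s = minsert x s emptyMapping := by
  funext y
  simp [constMapping, minsert, emptyMapping]

lemma munion_constMapping (S T : Set ℕ) (s : Span) :
    munion (constMapping S s) (constMapping T s) = constMapping (S ∪ T) s := by
  funext x
  by_cases hS : x ∈ S <;> by_cases hT : x ∈ T <;> simp [munion, constMapping, hS, hT]

lemma disjointDom_constMapping {S T : Set ℕ} (h : Disjoint S T) (s t : Span) :
    DisjointDom (constMapping S s) (constMapping T t) := by
  intro x
  by_cases hS : x ∈ S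
  · simp [constMapping, Set.disjoint_left.mp h hS]
  · simp [constMapping, hS]

lemma compatible_constMapping {S T : Set ℕ} (h : Disjoint S T) (s t : Span) :
    Compatible (constMapping S s) (constMapping T t) := by
  intro x s₁ s₂ h₁ h₂
  rcases disjointDom_constMapping h s t x with h' | h' <;> simp_all

/-! ### Matching -/

lemma RMatch.bounds {α : RGX Sig} {d : List Sig} {i j : ℕ} {μ : VMapping}
    (h : RMatch α d i j μ) : 1 ≤ i ∧ i ≤ j ∧ j ≤ d.length + 1 := by
  induction h with
  | eps h1 h2 | starNil h1 h2 => exact ⟨h1, le_rfl, h2⟩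
  | letter h1 h2 =>
      have := (List.getElem?_eq_some_iff.mp h2).1
      omega
  | unionL _ ih | unionR _ ih | bind _ _ ih => exact ih
  | concat _ _ _ ih1 ih2 | starCons _ _ _ ih1 ih2 =>
      exact ⟨ih1.1, ih1.2.1.trans ih2.2.1, ih2.2.2⟩

lemma rMatch_eps_iff {d : List Sig} {i j : ℕ} {μ : VMapping} :
    RMatch .eps d i j μ ↔ i = j ∧ 1 ≤ i ∧ i ≤ d.length + 1 ∧ μ = emptyMapping := by
  constructor
  · intro h
    cases h with | eps h1 h2 => exact ⟨rfl, h1, h2, rfl⟩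
  · rintro ⟨rfl, h1, h2, rfl⟩
    exact .eps h1 h2

lemma rMatch_letter_iff {d : List Sig} {σ : Sig} {i j : ℕ} {μ : VMapping} :
    RMatch (.letter σ) d i j μ ↔ 1 ≤ i ∧ d[i - 1]? = some σ ∧ j = i + 1 ∧ μ = emptyMapping := by
  constructor
  · intro h
    cases h with | letter h1 h2 => exact ⟨h1, h2, rfl, rfl⟩
  · rintro ⟨h1, h2, rfl, rfl⟩
    exact .letter h1 h2

lemma rMatch_union_iff {α β : RGX Sig} {d : List Sig} {i j : ℕ} {μ : VMapping} :
    RMatch (.union α β) d i j μ ↔ RMatch α d i j μ ∨ RMatch β d i j μ := by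
  constructor
  · intro h
    cases h with
    | unionL h => exact .inl h
    | unionR h => exact .inr h
  · rintro (h | h)
    exacts [.unionL h, .unionR h]

lemma rMatch_bind_eps_iff {x : ℕ} {d : List Sig} {i j : ℕ} {μ : VMapping} :
    RMatch (.bind x .eps) d i j μ ↔
      i = j ∧ 1 ≤ i ∧ i ≤ d.length + 1 ∧ μ = constMapping {x} (i, i) := by
  rw [constMapping_singleton]
  constructor
  · intro h
    cases h with
    | bind h _ =>
        obtain ⟨rfl, h1, h2, rfl⟩ := rMatch_eps_iff.mp h
        exact ⟨rfl, h1, h2, rfl⟩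
  · rintro ⟨rfl, h1, h2, rfl⟩
    exact .bind (.eps h1 h2) rfl

lemma rMatch_concatList_cons_iff {α : RGX Sig} {L : List (RGX Sig)} {d : List Sig}
    {i j : ℕ} {μ : VMapping} :
    RMatch (concatList (α :: L)) d i j μ ↔ ∃ k μ₁ μ₂, RMatch α d i k μ₁ ∧
      RMatch (concatList L) d k j μ₂ ∧ DisjointDom μ₁ μ₂ ∧ μ = munion μ₁ μ₂ := by
  cases L with
  | nil =>
      simp only [concatList, rMatch_eps_iff]
      constructor
      · intro h
        obtain ⟨hi, hij, hj⟩ := h.bounds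
        exact ⟨j, μ, emptyMapping, h, ⟨rfl, hi.trans hij, hj, rfl⟩, fun _ => .inr rfl,
          (munion_emptyMapping_right μ).symm⟩
      · rintro ⟨k, μ₁, μ₂, h, ⟨rfl, -, -, rfl⟩, -, rfl⟩
        rwa [munion_emptyMapping_right]
  | cons β L =>
      constructor
      · intro h
        cases h with | concat h₁ h₂ hd => exact ⟨_, _, _, h₁, h₂, hd, rfl⟩
      · rintro ⟨k, μ₁, μ₂, h₁, h₂, hd, rfl⟩
        exact .concat h₁ h₂ hd

lemma rMatch_concatList_append_iff {L L' : List (RGX Sig)} {d : List Sig}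
    {i j : ℕ} {μ : VMapping} :
    RMatch (concatList (L ++ L')) d i j μ ↔ ∃ k μ₁ μ₂, RMatch (concatList L) d i k μ₁ ∧
      RMatch (concatList L') d k j μ₂ ∧ DisjointDom μ₁ μ₂ ∧ μ = munion μ₁ μ₂ := by
  induction L generalizing i μ with
  | nil =>
      simp only [List.nil_append, concatList, rMatch_eps_iff]
      constructor
      · intro h
        obtain ⟨hi, hij, hj⟩ := h.bounds
        exact ⟨i, emptyMapping, μ, ⟨rfl, hi, hij.trans hj, rfl⟩, h, fun _ => .inl rfl, rfl⟩
      · rintro ⟨k, μ₁, μ₂, ⟨rfl, -, -, rfl⟩, h, -, rfl⟩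
        exact h
  | cons α L ih =>
      rw [List.cons_append, rMatch_concatList_cons_iff]
      constructor
      · rintro ⟨k, μ₁, μ₂, h₁, h₂, hd, rfl⟩
        obtain ⟨k', ν₁, ν₂, h₂₁, h₂₂, hd₂, rfl⟩ := ih.mp h₂
        rw [disjointDom_munion_right] at hd
        exact ⟨k', munion μ₁ ν₁, ν₂,
          rMatch_concatList_cons_iff.mpr ⟨k, μ₁, ν₁, h₁, h₂₁, hd.1, rfl⟩, h₂₂,
          disjointDom_munion_left.mpr ⟨hd.2, hd₂⟩, (munion_assoc _ _ _).symm⟩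
      · rintro ⟨k', μ₁, μ₂, h₁, h₂, hd, rfl⟩
        obtain ⟨k, ν₁, ν₂, h₁₁, h₁₂, hd₁, rfl⟩ := rMatch_concatList_cons_iff.mp h₁
        rw [disjointDom_munion_left] at hd
        exact ⟨k, ν₁, munion ν₂ μ₂, h₁₁, ih.mpr ⟨k', ν₂, μ₂, h₁₂, h₂, hd.2, rfl⟩,
          disjointDom_munion_right.mpr ⟨hd₁, hd.1⟩, munion_assoc _ _ _⟩

lemma rMatch_disjList_iff {L : List (RGX Sig)} {d : List Sig} {i j : ℕ} {μ : VMapping} :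
    RMatch (disjList L) d i j μ ↔ ∃ α ∈ L, RMatch α d i j μ := by
  induction L with
  | nil => simp only [disjList, List.not_mem_nil, false_and, exists_false, iff_false]; nofun
  | cons α L ih =>
      cases L with
      | nil => simp [disjList]
      | cons β L =>
          rw [show disjList (α :: β :: L) = .union α (disjList (β :: L)) from rfl,
            rMatch_union_iff, ih]
          simp only [List.exists_mem_cons_iff]

def ZeroWidth (d : List Sig) (α : RGX Sig) : Prop :=
  ∀ i j μ, RMatch α d i j μ → i = j

lemma RMatch.concatList_of_zeroWidth {L : List (RGX Sig)} {d : List Sig} {i j : ℕ}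
    {μ : VMapping} (hL : ∀ α ∈ L, ZeroWidth d α) (h : RMatch (concatList L) d i j μ) :
    i = j ∧ ∀ α ∈ L, ∃ μ', RMatch α d i i μ' ∧ ExtendedBy μ' μ := by
  induction L generalizing i μ with
  | nil => exact ⟨(rMatch_eps_iff.mp h).1, fun _ h => nomatch h⟩
  | cons α L ih =>
      obtain ⟨k, μ₁, μ₂, h₁, h₂, hd, rfl⟩ := rMatch_concatList_cons_iff.mp h
      obtain rfl := hL α List.mem_cons_self _ _ _ h₁
      obtain ⟨rfl, hrest⟩ := ih (fun β hβ => hL β (List.mem_cons_of_mem _ hβ)) h₂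
      refine ⟨rfl, ?_⟩
      rintro β (_ | ⟨_, hβ⟩)
      · exact ⟨μ₁, h₁, extendedBy_munion_left μ₁ μ₂⟩
      · obtain ⟨μ', hβ, hext⟩ := hrest β hβ
        exact ⟨μ', hβ, hext.trans (extendedBy_munion_right hd)⟩

lemma rMatch_concatList_map_constMapping {ι : Type*} {L : List ι} (α : ι → RGX Sig)
    (S : ι → Set ℕ) {d : List Sig} {p : ℕ} (hp : 1 ≤ p) (hp' : p ≤ d.length + 1)
    (hα : ∀ k ∈ L, RMatch (α k) d p p (constMapping (S k) (p, p)))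
    (hS : L.Pairwise fun k l => Disjoint (S k) (S l)) :
    RMatch (concatList (L.map α)) d p p (constMapping {x | ∃ k ∈ L, x ∈ S k} (p, p)) := by
  induction L with
  | nil =>
      simpa [concatList, constMapping_empty] using RMatch.eps (Sig := Sig) hp hp'
  | cons k L ih =>
      rw [List.pairwise_cons] at hS
      have hdisj : Disjoint (S k) {x | ∃ l ∈ L, x ∈ S l} := by
        rw [Set.disjoint_left]
        rintro x hx ⟨l, hl, hxl⟩
        exact Set.disjoint_left.mp (hS.1 l hl) hx hxl
      have hset : {x | ∃ l ∈ k :: L, x ∈ S l} = S k ∪ {x | ∃ l ∈ L, x ∈ S l} := by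
        ext x
        simp
      rw [List.map_cons, hset, ← munion_constMapping]
      exact rMatch_concatList_cons_iff.mpr ⟨p, _, _, hα k List.mem_cons_self,
        ih (fun l hl => hα l (List.mem_cons_of_mem _ hl)) hS.2,
        disjointDom_constMapping hdisj _ _, rfl⟩

lemma rMatch_concatList_ofFn_constMapping {k : ℕ} (α : Fin k → RGX Sig) (S : Fin k → Set ℕ)
    {d : List Sig} {p : ℕ} (hp : 1 ≤ p) (hp' : p ≤ d.length + 1)
    (hα : ∀ i, RMatch (α i) d p p (constMapping (S i) (p, p)))
    (hS : Pairwise fun i j => Disjoint (S i) (S j)) :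
    RMatch (concatList (List.ofFn α)) d p p (constMapping (⋃ i, S i) (p, p)) := by
  have h := rMatch_concatList_map_constMapping α S hp hp' (fun i _ => hα i)
    ((List.nodup_finRange k).pairwise_of_forall_ne fun i _ j _ hij => hS hij)
  rw [← List.ofFn_eq_map] at h
  convert h using 3
  ext x
  simp

/-! ### Sequentiality -/

lemma mem_vars_concatList {L : List (RGX Sig)} {x : ℕ} :
    x ∈ (concatList L).vars ↔ ∃ α ∈ L, x ∈ α.vars := by
  induction L with
  | nil => simp [concatList, RGX.vars]
  | cons α L ih =>
      cases L with
      | nil => simp [concatList]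
      | cons β L => simp only [concatList, RGX.vars, Finset.mem_union, ih, List.exists_mem_cons_iff]

lemma mem_vars_disjList {L : List (RGX Sig)} {x : ℕ} :
    x ∈ (disjList L).vars ↔ ∃ α ∈ L, x ∈ α.vars := by
  induction L with
  | nil => simp [disjList, RGX.vars]
  | cons α L ih =>
      cases L with
      | nil => simp [disjList]
      | cons β L => simp only [disjList, RGX.vars, Finset.mem_union, ih, List.exists_mem_cons_iff]

lemma sequential_concatList {L : List (RGX Sig)} (h : ∀ α ∈ L, α.Sequential)
    (hL : L.Pairwise fun α β => Disjoint α.vars β.vars) : (concatList L).Sequential := by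
  induction L with
  | nil => trivial
  | cons α L ih =>
      rw [List.pairwise_cons] at hL
      cases L with
      | nil => exact h α List.mem_cons_self
      | cons β L =>
          refine ⟨h α List.mem_cons_self, ih (fun γ hγ => h γ (.tail _ hγ)) hL.2, ?_⟩
          rw [Finset.disjoint_left]
          intro x hx hx'
          obtain ⟨γ, hγ, hxγ⟩ := mem_vars_concatList.mp hx'
          exact Finset.disjoint_left.mp (hL.1 γ hγ) hx hxγ

lemma sequential_disjList {L : List (RGX Sig)} (h : ∀ α ∈ L, α.Sequential) :
    (disjList L).Sequential := by
  induction L with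
  | nil => trivial
  | cons α L ih =>
      cases L with
      | nil => exact h α List.mem_cons_self
      | cons β L => exact ⟨h α List.mem_cons_self, ih fun γ hγ => h γ (.tail _ hγ)⟩

lemma sequential_bind_eps (x : ℕ) : (RGX.bind x (.eps : RGX Sig)).Sequential :=
  ⟨trivial, by simp [RGX.vars]⟩

/-! ### The gadgets -/

lemma encVar0_inj {m i i' j j' : ℕ} {b b' : Bool} (hj : j < m) (hj' : j' < m)
    (h : encVar0 m i j b = encVar0 m i' j' b') : i = i' ∧ j = j' ∧ b = b' := by
  unfold encVar0 at h
  have := b.toNat_lt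
  have := b'.toNat_lt
  have hb : b = b' := by cases b <;> cases b' <;> simp_all <;> omega
  have hsum : i * m + j = i' * m + j' := by omega
  have hi : i = i' := by
    have hdiv := congrArg (· / m) hsum
    simpa only [Nat.add_comm (_ * m), Nat.add_mul_div_right _ _ (by omega : 0 < m),
      Nat.div_eq_of_lt hj, Nat.div_eq_of_lt hj', zero_add] using hdiv
  subst hi
  exact ⟨rfl, by omega, hb⟩

/-- `x_i^{1,c}{ε} ⋯ x_i^{m,c}{ε}`, one of the two branches of `γ_{x_i}`. -/
def valueChain (m i : ℕ) (c : Bool) : RGX Sig :=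
  concatList (List.ofFn fun j : Fin m => .bind (encVar0 m i j c) .eps)

variable {n m : ℕ}

lemma gammaVar0_eq_union (i : Fin n) :
    (gammaVar0 n m i : RGX Sig) = .union (valueChain m i true) (valueChain m i false) :=
  rfl

lemma mem_vars_valueChain {i x : ℕ} {c : Bool} :
    x ∈ (valueChain m i c : RGX Sig).vars ↔ ∃ j : Fin m, x = encVar0 m i j c := by
  simp [valueChain, mem_vars_concatList, RGX.vars]

lemma mem_vars_deltaS0 {φ : Fin m → Clause3 n} {j : Fin m} {x : ℕ}
    (hx : x ∈ (deltaS0 φ j : RGX Sig).vars) :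
    ∃ l ∈ litsOf (φ j), x = encVar0 m l.1 j l.2 := by
  simp only [deltaS0, mem_vars_disjList, List.mem_map, exists_exists_and_eq_and] at hx
  obtain ⟨l, hl, hx⟩ := hx
  exact ⟨l, hl, by simpa [RGX.vars] using hx⟩

lemma sequential_valueChain (i : ℕ) (c : Bool) : (valueChain m i c : RGX Sig).Sequential := by
  refine sequential_concatList ?_ (List.pairwise_ofFn.mpr fun j j' hjj' => ?_)
  · simp only [List.mem_ofFn, forall_exists_index, forall_apply_eq_imp_iff]
    exact fun j => sequential_bind_eps _
  · simpa [RGX.vars] using fun h => hjj'.ne (Fin.ext (encVar0_inj j.2 j'.2 h).2.1)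

lemma sequential_deltaS0 (φ : Fin m → Clause3 n) (j : Fin m) :
    (deltaS0 φ j : RGX Sig).Sequential := by
  refine sequential_disjList ?_
  simp only [List.mem_map, forall_exists_index, and_imp, forall_apply_eq_imp_iff₂]
  exact fun l _ => sequential_bind_eps _

lemma sequential_gamma1S0 (a : Sig) : (gamma1S0 a n m).Sequential := by
  refine sequential_concatList ?_ ?_
  · simp only [List.mem_append, List.mem_ofFn, List.mem_singleton]
    rintro α (⟨i, rfl⟩ | rfl)
    exacts [⟨sequential_valueChain i true, sequential_valueChain i false⟩, trivial]
  · refine List.pairwise_append.mpr ⟨List.pairwise_ofFn.mpr fun i i' hii' => ?_,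
      List.pairwise_singleton _ _, fun _ _ _ h => by simp [List.mem_singleton.mp h, RGX.vars]⟩
    rw [Finset.disjoint_left]
    simp only [gammaVar0_eq_union, RGX.vars, Finset.mem_union, mem_vars_valueChain]
    rintro x (⟨j, rfl⟩ | ⟨j, rfl⟩) (⟨j', h⟩ | ⟨j', h⟩) <;>
      exact hii'.ne (Fin.ext (encVar0_inj j.2 j'.2 h).1)

lemma sequential_gamma2S0 (a : Sig) (φ : Fin m → Clause3 n) : (gamma2S0 a φ).Sequential := by
  refine sequential_concatList ?_ ?_
  · simp only [List.mem_cons, List.mem_ofFn]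
    rintro α (rfl | ⟨j, rfl⟩)
    exacts [trivial, sequential_deltaS0 φ j]
  · refine List.pairwise_cons.mpr ⟨fun _ _ => by simp [RGX.vars],
      List.pairwise_ofFn.mpr fun j j' hjj' => ?_⟩
    rw [Finset.disjoint_left]
    intro x hx hx'
    obtain ⟨l, -, rfl⟩ := mem_vars_deltaS0 hx
    obtain ⟨l', -, h⟩ := mem_vars_deltaS0 hx'
    exact hjj'.ne (Fin.ext (encVar0_inj j.2 j'.2 h).2.1)

lemma RMatch.valueChain_elim {i : ℕ} {c : Bool} {d : List Sig} {p q : ℕ} {μ : VMapping}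
    (h : RMatch (valueChain m i c) d p q μ) :
    p = q ∧ ∀ j : Fin m, μ (encVar0 m i j c) = some (p, p) := by
  have hzero : ∀ α ∈ List.ofFn fun j : Fin m => (RGX.bind (encVar0 m i j c) .eps : RGX Sig),
      ZeroWidth d α := by
    simp only [List.mem_ofFn, forall_exists_index, forall_apply_eq_imp_iff]
    exact fun j _ _ _ h => (rMatch_bind_eps_iff.mp h).1
  obtain ⟨rfl, hfactors⟩ := h.concatList_of_zeroWidth hzero
  refine ⟨rfl, fun j => ?_⟩
  obtain ⟨μ', hμ', hext⟩ := hfactors _ (List.mem_ofFn.mpr ⟨j, rfl⟩)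
  obtain ⟨-, -, -, rfl⟩ := rMatch_bind_eps_iff.mp hμ'
  exact hext _ _ (by simp [constMapping])

lemma rMatch_valueChain_constMapping (i : ℕ) (c : Bool) {d : List Sig} {p : ℕ}
    (hp : 1 ≤ p) (hp' : p ≤ d.length + 1) :
    RMatch (valueChain m i c) d p p (constMapping (⋃ j : Fin m, {encVar0 m i j c}) (p, p)) :=
  rMatch_concatList_ofFn_constMapping _ _ hp hp'
    (fun _ => rMatch_bind_eps_iff.mpr ⟨rfl, hp, hp', rfl⟩)
    (fun j j' hjj' => by simpa using fun h => hjj' (Fin.ext (encVar0_inj j.2 j'.2 h).2.1))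

lemma rMatch_gammaVar0_constMapping (i : Fin n) (c : Bool) {d : List Sig} {p : ℕ}
    (hp : 1 ≤ p) (hp' : p ≤ d.length + 1) :
    RMatch (gammaVar0 n m i) d p p (constMapping (⋃ j : Fin m, {encVar0 m i j c}) (p, p)) := by
  cases c
  exacts [.unionR (rMatch_valueChain_constMapping i false hp hp'),
    .unionL (rMatch_valueChain_constMapping i true hp hp')]

lemma RMatch.gammaVar0_elim {i : Fin n} {d : List Sig} {p q : ℕ} {μ : VMapping}
    (h : RMatch (gammaVar0 n m i) d p q μ) :
    p = q ∧ ∃ c : Bool, ∀ j : Fin m, μ (encVar0 m i j c) = some (p, p) := by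
  rcases rMatch_union_iff.mp h with h | h
  · exact h.valueChain_elim.imp_right fun h => ⟨true, h⟩
  · exact h.valueChain_elim.imp_right fun h => ⟨false, h⟩

lemma rMatch_deltaS0_iff {φ : Fin m → Clause3 n} {j : Fin m} {d : List Sig} {p q : ℕ}
    {μ : VMapping} :
    RMatch (deltaS0 φ j) d p q μ ↔ p = q ∧ 1 ≤ p ∧ p ≤ d.length + 1 ∧
      ∃ l ∈ litsOf (φ j), μ = constMapping {encVar0 m l.1 j l.2} (p, p) := by
  simp only [deltaS0, rMatch_disjList_iff, List.mem_map, exists_exists_and_eq_and,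
    rMatch_bind_eps_iff]
  aesop

lemma exists_of_mem_rgxSem_gamma1S0 {a : Sig} {μ : VMapping}
    (h : μ ∈ rgxSem (gamma1S0 a n m) [a]) :
    ∃ b : Fin n → Bool, ∀ (i : Fin n) (j : Fin m), μ (encVar0 m i j (b i)) = some (1, 1) := by
  obtain ⟨k, μ₁, μ₂, h₁, h₂, -, rfl⟩ := rMatch_concatList_append_iff.mp h
  obtain ⟨-, -, hk, rfl⟩ := rMatch_letter_iff.mp h₂
  obtain rfl : k = 1 := by simpa using hk.symm
  have hzero : ∀ α ∈ List.ofFn (gammaVar0 n m), ZeroWidth [a] α := by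
    simp only [List.mem_ofFn, forall_exists_index, forall_apply_eq_imp_iff]
    exact fun i _ _ _ h => h.gammaVar0_elim.1
  obtain ⟨-, hfactors⟩ := h₁.concatList_of_zeroWidth hzero
  have hval (i : Fin n) : ∃ c : Bool, ∀ j : Fin m, μ₁ (encVar0 m i j c) = some (1, 1) := by
    obtain ⟨μ', hμ', hext⟩ := hfactors _ (List.mem_ofFn.mpr ⟨i, rfl⟩)
    obtain ⟨-, c, hc⟩ := hμ'.gammaVar0_elim
    exact ⟨c, fun j => hext _ _ (hc j)⟩
  choose b hb using hval
  exact ⟨b, fun i j => by simpa [munion_emptyMapping_right] using hb i j⟩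

lemma constMapping_mem_rgxSem_gamma1S0 (a : Sig) (b : Fin n → Bool) :
    constMapping (⋃ (i : Fin n) (j : Fin m), {encVar0 m i j (b i)}) (1, 1) ∈
      rgxSem (gamma1S0 a n m) [a] := by
  have hdisj : Pairwise fun i i' : Fin n =>
      Disjoint (⋃ j : Fin m, {encVar0 m i j (b i)}) (⋃ j : Fin m, {encVar0 m i' j (b i')}) := by
    intro i i' hii'
    simp only [Set.disjoint_iUnion_left, Set.disjoint_iUnion_right, Set.disjoint_singleton]
    exact fun j j' h => hii' (Fin.ext (encVar0_inj j'.2 j.2 h).1)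
  have hchain := rMatch_concatList_ofFn_constMapping _ _ (d := [a]) le_rfl (by simp)
    (fun i => rMatch_gammaVar0_constMapping i (b i) le_rfl (by simp)) hdisj
  exact rMatch_concatList_append_iff.mpr ⟨1, _, emptyMapping, hchain,
    rMatch_letter_iff.mpr ⟨le_rfl, rfl, rfl, rfl⟩, fun _ => .inr rfl,
    (munion_emptyMapping_right _).symm⟩

lemma exists_of_mem_rgxSem_gamma2S0 {a : Sig} {φ : Fin m → Clause3 n} {μ : VMapping}
    (h : μ ∈ rgxSem (gamma2S0 a φ) [a]) (j : Fin m) :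
    ∃ l ∈ litsOf (φ j), μ (encVar0 m l.1 j l.2) = some (2, 2) := by
  obtain ⟨k, μ₁, μ₂, h₁, h₂, -, rfl⟩ := rMatch_concatList_cons_iff.mp h
  obtain ⟨-, -, rfl, rfl⟩ := rMatch_letter_iff.mp h₁
  have hzero : ∀ α ∈ List.ofFn (deltaS0 φ : Fin m → RGX Sig), ZeroWidth [a] α := by
    simp only [List.mem_ofFn, forall_exists_index, forall_apply_eq_imp_iff]
    exact fun j _ _ _ h => (rMatch_deltaS0_iff.mp h).1
  obtain ⟨-, hfactors⟩ := h₂.concatList_of_zeroWidth hzero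
  obtain ⟨μ', hμ', hext⟩ := hfactors _ (List.mem_ofFn.mpr ⟨j, rfl⟩)
  obtain ⟨-, -, -, l, hl, rfl⟩ := rMatch_deltaS0_iff.mp hμ'
  exact ⟨l, hl, hext _ _ (by simp [constMapping])⟩

lemma constMapping_mem_rgxSem_gamma2S0 (a : Sig) (φ : Fin m → Clause3 n)
    (w : Fin m → Fin n × Bool) (hw : ∀ j, w j ∈ litsOf (φ j)) :
    constMapping (⋃ j : Fin m, {encVar0 m (w j).1 j (w j).2}) (2, 2) ∈
      rgxSem (gamma2S0 a φ) [a] := by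
  have hchain := rMatch_concatList_ofFn_constMapping (deltaS0 φ) _ (d := [a]) (p := 2)
    (by norm_num) (by simp)
    (fun j => rMatch_deltaS0_iff.mpr ⟨rfl, by norm_num, by simp, w j, hw j, rfl⟩)
    (fun j j' hjj' => by simpa using fun h => hjj' (Fin.ext (encVar0_inj j.2 j'.2 h).2.1))
  exact rMatch_concatList_cons_iff.mpr ⟨2, emptyMapping, _,
    rMatch_letter_iff.mpr ⟨le_rfl, rfl, rfl, rfl⟩, hchain, fun _ => .inl rfl, rfl⟩

theorem statement0 (a : Sig) (n m : ℕ) (φ : Fin m → Clause3 n) :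
    (gamma1S0 a n m).Sequential ∧ (gamma2S0 a φ).Sequential ∧
    ((joinSet (rgxSem (gamma1S0 a n m) [a]) (rgxSem (gamma2S0 a φ) [a])).Nonempty ↔
      Sat3 φ) := by
  refine ⟨sequential_gamma1S0 a, sequential_gamma2S0 a φ, ⟨?_, ?_⟩⟩
  · rintro ⟨-, μ₁, hμ₁, μ₂, hμ₂, hcomp, -⟩
    obtain ⟨b, hb⟩ := exists_of_mem_rgxSem_gamma1S0 hμ₁
    refine ⟨fun i => !b i, fun j => ?_⟩
    obtain ⟨l, hl, hμ₂l⟩ := exists_of_mem_rgxSem_gamma2S0 hμ₂ j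
    refine ⟨l, hl, by_contra fun hne => ?_⟩
    have hbl : b l.1 = l.2 := by simpa using hne
    have hμ₁l := hb l.1 j
    rw [hbl] at hμ₁l
    simpa using hcomp _ _ _ hμ₁l hμ₂l
  · rintro ⟨τ, hτ⟩
    choose w hw hτw using hτ
    refine ⟨_, _, constMapping_mem_rgxSem_gamma1S0 a fun i => !τ i, _,
      constMapping_mem_rgxSem_gamma2S0 a φ w hw, compatible_constMapping ?_ _ _, rfl⟩
    rw [Set.disjoint_left]
    simp only [Set.mem_iUnion, Set.mem_singleton_iff]
    rintro x ⟨i, j, rfl⟩ ⟨j', h⟩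
    obtain ⟨hi, -, hb⟩ := encVar0_inj j.2 j'.2 h
    obtain rfl : i = (w j').1 := Fin.ext hi
    simp [← hτw j'] at hb

end Spanners
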